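/- Define Ψ(x) = Ω(1/x, 1/(2x)) for x > 0, where Ω(x,y) = ∑_{n∈ℤ} max(0, 1 - |n·x - y|)². Then Ψ(x) = 0 for all x ∈ (0, 1/2], and Ψ(x) > 0 for all x > 1/2. -/

import Mathlib

/-!
The `n`-th term of `Ψ(x)` is `max(0, 1 - |2n - 1| / (2x))²`. Since `|2n - 1| ≥ 1` for every
integer `n`, all terms vanish once `2x ≤ 1`; for `2x > 1` the term `n = 0` is positive, and the
series is a finite sum of nonnegative terms because `|n·a - b| < 1` holds for only finitely many
`n` when `a ≠ 0`.
-/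

/-- `Ω(x,y) = ∑_{n∈ℤ} max(0, 1 - |n·x - y|)²`. -/
noncomputable def Omega (x y : ℝ) : ℝ := ∑' n : ℤ, (max 0 (1 - |(n : ℝ) * x - y|)) ^ 2

/-- `Ψ(x) = Ω(1/x, 1/(2x))` for `x > 0`. -/
noncomputable def Psi (x : ℝ) : ℝ := Omega (1 / x) (1 / (2 * x))

lemma max_zero_one_sub_abs_sq_eq_zero {t : ℝ} (ht : 1 ≤ |t|) : max 0 (1 - |t|) ^ 2 = 0 := by
  rw [max_eq_left (by linarith), zero_pow two_ne_zero]

lemma max_zero_one_sub_abs_sq_pos {t : ℝ} (ht : |t| < 1) : 0 < max 0 (1 - |t|) ^ 2 :=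
  pow_pos (lt_max_of_lt_right (by linarith)) 2

lemma finite_setOf_abs_intCast_mul_sub_lt {x : ℝ} (hx : x ≠ 0) (y c : ℝ) :
    {n : ℤ | |(n : ℝ) * x - y| < c}.Finite := by
  set N := ⌈(c + |y|) / |x|⌉
  refine (Set.finite_Icc (-N) N).subset fun n (hn : |(n : ℝ) * x - y| < c) => ?_
  have hnx : |(n : ℝ)| * |x| < c + |y| := by
    rw [← abs_mul]
    linarith [abs_sub_abs_le_abs_sub ((n : ℝ) * x) y, hn]
  have hnN : ((|n| : ℤ) : ℝ) < N := by
    rw [Int.cast_abs]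
    exact ((lt_div_iff₀ (abs_pos.mpr hx)).mpr hnx).trans_le (Int.le_ceil _)
  exact abs_le.mp (Int.cast_lt.mp hnN).le

lemma summable_Omega {x : ℝ} (hx : x ≠ 0) (y : ℝ) :
    Summable fun n : ℤ => max 0 (1 - |(n : ℝ) * x - y|) ^ 2 := by
  refine summable_of_hasFiniteSupport ((finite_setOf_abs_intCast_mul_sub_lt hx y 1).subset ?_)
  intro n hn
  by_contra h
  exact hn (max_zero_one_sub_abs_sq_eq_zero (not_lt.mp h))

lemma Omega_eq_zero {x y : ℝ} (h : ∀ n : ℤ, 1 ≤ |(n : ℝ) * x - y|) : Omega x y = 0 := by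
  simp only [Omega, max_zero_one_sub_abs_sq_eq_zero (h _), tsum_zero]

lemma Omega_pos {x y : ℝ} (hx : x ≠ 0) {n : ℤ} (hn : |(n : ℝ) * x - y| < 1) : 0 < Omega x y :=
  (summable_Omega hx y).tsum_pos (fun _ => sq_nonneg _) n (max_zero_one_sub_abs_sq_pos hn)

lemma abs_intCast_mul_inv_sub_inv_two_mul {x : ℝ} (hx : 0 < x) (n : ℤ) :
    |(n : ℝ) * (1 / x) - 1 / (2 * x)| = |2 * (n : ℝ) - 1| / (2 * x) := by
  have h : (n : ℝ) * (1 / x) - 1 / (2 * x) = (2 * (n : ℝ) - 1) / (2 * x) := by field_simp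
  rw [h, abs_div, abs_of_pos (by positivity : 0 < 2 * x)]

lemma one_le_abs_two_mul_intCast_sub_one (n : ℤ) : (1 : ℝ) ≤ |2 * (n : ℝ) - 1| := by
  have h : (1 : ℤ) ≤ |2 * n - 1| := Int.one_le_abs (by omega)
  exact_mod_cast h

theorem Psi_eq_zero {x : ℝ} (hx : 0 < x) (hx2 : x ≤ 1 / 2) : Psi x = 0 := by
  refine Omega_eq_zero fun n => ?_
  rw [abs_intCast_mul_inv_sub_inv_two_mul hx, le_div_iff₀ (by positivity)]
  linarith [one_le_abs_two_mul_intCast_sub_one n]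

theorem Psi_pos {x : ℝ} (hx : 1 / 2 < x) : 0 < Psi x := by
  have hx0 : 0 < x := by linarith
  refine Omega_pos (one_div_ne_zero hx0.ne') (n := 0) ?_
  rw [Int.cast_zero, zero_mul, zero_sub, abs_neg, abs_of_pos (by positivity),
    div_lt_one (by positivity)]
  linarith

/-- `Ψ(x) = 0` for `x ∈ (0, 1/2]`, and `Ψ(x) > 0` for `x > 1/2`. -/
theorem stmt_9 :
    (∀ x : ℝ, 0 < x → x ≤ 1 / 2 → Psi x = 0) ∧ (∀ x : ℝ, 1 / 2 < x → 0 < Psi x) :=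
  ⟨fun _ hx hx2 => Psi_eq_zero hx hx2, fun _ hx => Psi_pos hx⟩
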